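/- From the block-wise bound to a discounted robust exponential stability estimate: Let L >= 2 be an integer, lambda in (0,1), c3 >= 1, c_e >= 0, and let e : N -> [0, infinity) and w : N -> [0, infinity) satisfy, for every j >= 0 and every t in {0,...,L-2}: e(t + j(L-1)) <= max( lambda^j c3 e(0) , c_e max_{j(L-1) <= k <= j(L-1)+t} w(k) , max_{0 <= i <= j-1} lambda^{j-i-1} c_e max_{i(L-1) <= k <= (i+1)(L-1)-1} w(k) ). Define c1 = c3 / lambda^{(L-2)/(2(L-1))}, c2 = c_e / lambda, and lambda1 = lambda2 = lambda^{1/(2(L-1))}. Then for every t in N: e(t) <= max( c1 e(0) lambda1^t , max_{0 <= tau <= t} c2 w(t - tau) lambda2^tau ). -/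

import Mathlib

open BigOperators

/-- Maximum of `f 0, …, f (τ-1)`, taken as `0` for `τ = 0`. -/
noncomputable def maxUpTo (τ : ℕ) (f : ℕ → ℝ) : ℝ := (Finset.range τ).fold max 0 f

/-- Maximum of `f a, …, f b`, taken as `0` when the range is empty. -/
noncomputable def maxIcc (a b : ℕ) (f : ℕ → ℝ) : ℝ := (Finset.Icc a b).fold max 0 f

lemma maxUpTo_nonneg (n : ℕ) (f : ℕ → ℝ) : 0 ≤ maxUpTo n f :=
  (Finset.le_fold_max _).mpr (Or.inl le_rfl)

lemma le_maxUpTo {τ n : ℕ} (h : τ < n) (f : ℕ → ℝ) : f τ ≤ maxUpTo n f :=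
  (Finset.le_fold_max _).mpr (Or.inr ⟨τ, Finset.mem_range.mpr h, le_rfl⟩)

lemma mul_maxIcc_le {c B : ℝ} (a b : ℕ) (f : ℕ → ℝ) (hc : 0 ≤ c) (hB : 0 ≤ B)
    (h : ∀ k ∈ Finset.Icc a b, c * f k ≤ B) : c * maxIcc a b f ≤ B := by
  rcases eq_or_lt_of_le hc with rfl | hcpos
  · simpa using hB
  · have hfold : maxIcc a b f ≤ B / c := by
      show (Finset.Icc a b).fold max 0 f ≤ B / c
      refine (Finset.fold_max_le _).mpr ⟨by positivity, fun k hk => ?_⟩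
      rw [le_div_iff₀ hcpos, mul_comm]
      exact h k hk
    calc c * maxIcc a b f ≤ c * (B / c) := mul_le_mul_of_nonneg_left hfold hcpos.le
      _ = B := by field_simp

/-- From the block-wise bound to a discounted robust exponential stability
estimate, with `c1 = c3 / lam^((L-2)/(2(L-1)))`, `c2 = ce / lam` and
`lam1 = lam2 = lam^(1/(2(L-1)))`. -/
theorem blockwise_to_discounted_RGES
    (L : ℕ) (hL : 2 ≤ L) (lam c3 ce : ℝ)
    (hlam : lam ∈ Set.Ioo (0 : ℝ) 1) (hc3 : 1 ≤ c3) (hce : 0 ≤ ce)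
    (e w : ℕ → ℝ) (he : ∀ t, 0 ≤ e t) (hw : ∀ t, 0 ≤ w t)
    (hblock : ∀ (j t : ℕ), t ≤ L - 2 →
      e (t + j * (L - 1)) ≤
        max (lam ^ j * c3 * e 0)
          (max (ce * maxIcc (j * (L - 1)) (j * (L - 1) + t) w)
            ((Finset.range j).fold max 0 (fun i =>
              lam ^ (j - i - 1) * ce * maxIcc (i * (L - 1)) ((i + 1) * (L - 1) - 1) w)))) :
    ∀ t : ℕ,
      e t ≤
        max ((c3 / lam ^ (((L : ℝ) - 2) / (2 * ((L : ℝ) - 1)))) * e 0 *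
            (lam ^ ((1 : ℝ) / (2 * ((L : ℝ) - 1)))) ^ t)
          (maxUpTo (t + 1) (fun τ =>
            (ce / lam) * w (t - τ) * (lam ^ ((1 : ℝ) / (2 * ((L : ℝ) - 1)))) ^ τ)) := by
  obtain ⟨hlam0, hlam1⟩ := hlam
  intro t
  set D := L - 1 with hDdef
  have hDpos : 0 < D := by omega
  set r : ℝ := (1 : ℝ) / (2 * ((L : ℝ) - 1)) with hr
  set ρ : ℝ := ((L : ℝ) - 2) / (2 * ((L : ℝ) - 1)) with hρ
  have hL' : (2 : ℝ) ≤ (L : ℝ) := by exact_mod_cast hL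
  have hD' : (1 : ℝ) ≤ (L : ℝ) - 1 := by linarith
  have h2D : (0 : ℝ) < 2 * ((L : ℝ) - 1) := by linarith
  have hDR : (D : ℝ) = (L : ℝ) - 1 := by
    have h1 : D + 1 = L := by omega
    have h2 := congrArg (Nat.cast : ℕ → ℝ) h1
    push_cast at h2; linarith
  have hmu : ∀ n : ℕ, (lam ^ r) ^ n = lam ^ (r * n) := fun n => by
    rw [← Real.rpow_natCast (lam ^ r) n, ← Real.rpow_mul hlam0.le]
  set j := t / D with hjdef
  set t' := t % D with ht'def
  have ht'lt : t' < D := by rw [ht'def]; exact Nat.mod_lt _ hDpos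
  have ht'le : t' ≤ L - 2 := by omega
  have htdecomp : t = t' + j * D := by
    rw [ht'def, hjdef, mul_comm]; exact (Nat.mod_add_div t D).symm
  have htR : (t : ℝ) = (t' : ℝ) + (j : ℝ) * ((L : ℝ) - 1) := by
    rw [← hDR]; exact_mod_cast htdecomp
  have ht'R : (t' : ℝ) ≤ (L : ℝ) - 2 := by
    have h : t' + 2 ≤ L := by omega
    have h2 := (Nat.cast_le (α := ℝ)).mpr h
    push_cast at h2; linarith
  have hjD : j * D ≤ t := htdecomp ▸ Nat.le_add_left _ _
  have key := hblock j t' ht'le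
  rw [← htdecomp] at key
  have hce' : 0 ≤ ce / lam := div_nonneg hce hlam0.le
  refine key.trans (max_le ?_ (max_le ?_ ?_))
  · -- term 1
    refine le_max_of_le_left ?_
    rw [hmu t]
    have hexp1 : r * t ≤ (j : ℝ) + ρ := by
      rw [hr, hρ, htR, div_mul_eq_mul_div, one_mul, div_le_iff₀ h2D, add_mul,
        div_mul_cancel₀ _ (ne_of_gt h2D)]
      have hj0 : (0 : ℝ) ≤ (j : ℝ) := Nat.cast_nonneg j
      nlinarith
    have h1 : lam ^ ((j : ℝ)) * lam ^ ρ ≤ lam ^ (r * t) := by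
      rw [← Real.rpow_add hlam0]
      exact Real.rpow_le_rpow_of_exponent_ge hlam0 hlam1.le hexp1
    have hP : (0 : ℝ) < lam ^ ρ := Real.rpow_pos_of_pos hlam0 _
    rw [div_mul_eq_mul_div, div_mul_eq_mul_div, le_div_iff₀ hP,
      ← Real.rpow_natCast lam j]
    calc lam ^ ((j : ℝ)) * c3 * e 0 * lam ^ ρ
        = (c3 * e 0) * (lam ^ ((j : ℝ)) * lam ^ ρ) := by ring
      _ ≤ (c3 * e 0) * lam ^ (r * t) :=
          mul_le_mul_of_nonneg_left h1 (mul_nonneg (by linarith) (he 0))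
      _ = c3 * e 0 * lam ^ (r * t) := by ring
  · -- term 2
    refine le_max_of_le_right ?_
    refine mul_maxIcc_le _ _ _ hce (maxUpTo_nonneg _ _) ?_
    intro k hk
    obtain ⟨hk1, hk2⟩ := Finset.mem_Icc.mp hk
    have hkt : k ≤ t := by omega
    set τ := t - k with hτdef
    have hτmem : τ < t + 1 := by omega
    have hwk : t - τ = k := by omega
    have hτle : τ ≤ t' := by omega
    refine le_trans ?_ (le_maxUpTo hτmem _)
    show ce * w k ≤ ce / lam * w (t - τ) * (lam ^ r) ^ τ
    rw [hwk, hmu τ]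
    have hrτ : r * τ ≤ 1 := by
      have hτR : (τ : ℝ) ≤ (L : ℝ) - 2 := by
        have h : τ + 2 ≤ L := by omega
        have h2 := (Nat.cast_le (α := ℝ)).mpr h
        push_cast at h2; linarith
      rw [hr, div_mul_eq_mul_div, one_mul, div_le_one h2D]
      linarith
    have hexp2 : lam ≤ lam ^ (r * τ) := by
      calc lam = lam ^ (1 : ℝ) := (Real.rpow_one lam).symm
        _ ≤ lam ^ (r * τ) := Real.rpow_le_rpow_of_exponent_ge hlam0 hlam1.le hrτ
    calc ce * w k = (ce / lam * w k) * lam := by field_simp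
      _ ≤ (ce / lam * w k) * lam ^ (r * τ) :=
          mul_le_mul_of_nonneg_left hexp2 (mul_nonneg hce' (hw k))
      _ = ce / lam * w k * lam ^ (r * τ) := by ring
  · -- term 3
    refine le_max_of_le_right ?_
    refine (Finset.fold_max_le _).mpr ⟨maxUpTo_nonneg _ _, fun i hi => ?_⟩
    have hij : i < j := Finset.mem_range.mp hi
    refine mul_maxIcc_le _ _ _ (by positivity) (maxUpTo_nonneg _ _) ?_
    intro k hk
    obtain ⟨hk1, hk2⟩ := Finset.mem_Icc.mp hk
    have hx : 0 < (i + 1) * D := Nat.mul_pos (Nat.succ_pos i) hDpos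
    have h2 : k < (i + 1) * D := lt_of_le_of_lt hk2 (Nat.pred_lt (Nat.pos_iff_ne_zero.mp hx))
    have h3 : (i + 1) * D ≤ j * D := Nat.mul_le_mul_right D (by omega)
    have hkt : k < t := lt_of_lt_of_le h2 (le_trans h3 hjD)
    set τ := t - k with hτdef
    have hτmem : τ < t + 1 := by omega
    have hwk : t - τ = k := by omega
    refine le_trans ?_ (le_maxUpTo hτmem _)
    show lam ^ (j - i - 1) * ce * w k ≤ ce / lam * w (t - τ) * (lam ^ r) ^ τ
    rw [hwk, hmu τ]
    have hkR : (i : ℝ) * ((L : ℝ) - 1) ≤ (k : ℝ) := by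
      have h4 : ((i * D : ℕ) : ℝ) ≤ (k : ℝ) := by exact_mod_cast hk1
      push_cast at h4; rw [hDR] at h4; linarith
    have hτR : (τ : ℝ) = (t : ℝ) - (k : ℝ) := by
      rw [hτdef]; push_cast [Nat.cast_sub hkt.le]; ring
    have hm1 : (1 : ℝ) ≤ (j : ℝ) - (i : ℝ) := by
      have h5 : (i : ℝ) + 1 ≤ (j : ℝ) := by exact_mod_cast hij
      linarith
    have hexp3 : r * τ ≤ (j : ℝ) - (i : ℝ) := by
      rw [hr, div_mul_eq_mul_div, one_mul, div_le_iff₀ h2D]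
      nlinarith [hm1, hD', ht'R, htR, hτR, hkR]
    have hpow : lam ^ ((j : ℝ) - (i : ℝ)) ≤ lam ^ (r * τ) :=
      Real.rpow_le_rpow_of_exponent_ge hlam0 hlam1.le hexp3
    calc lam ^ (j - i - 1) * ce * w k
        = (ce / lam * w k) * (lam ^ (j - i - 1) * lam) := by field_simp
      _ = (ce / lam * w k) * lam ^ (j - i) := by
          rw [← pow_succ, show j - i - 1 + 1 = j - i by omega]
      _ = (ce / lam * w k) * lam ^ ((j : ℝ) - (i : ℝ)) := by
          rw [← Real.rpow_natCast lam (j - i), Nat.cast_sub hij.le]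
      _ ≤ (ce / lam * w k) * lam ^ (r * τ) :=
          mul_le_mul_of_nonneg_left hpow (mul_nonneg hce' (hw k))
      _ = ce / lam * w k * lam ^ (r * τ) := by ring
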